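/- arXiv:1007.4095 — 2 statements merged into one kernel-verified Lean document; each statement's English description precedes it below -/
import Mathlib

section
/- Let φ ∈ X and let α : ℝ → ℝ₊ be continuous and bounded, γ ∈ L¹(ℝ₊) nonnegative. Then ∫_{{(x,v): |v|²/2+φ(x)<0}} α(|v|²/2+φ(x)) γ(a_φ(|v|²/2+φ(x))) dx dv = ∫_0^∞ α(a_φ^{-1}(s)) γ(s) ds. -/
open MeasureTheory Real Filter Set

noncomputable section

abbrev R3 := EuclideanSpace ℝ (Fin 3)

def mX (φ : R3 → ℝ) : ℝ := ⨅ x : R3, (1 + ‖x‖) * |φ x|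

def memX (φ : R3 → ℝ) : Prop :=
  Continuous φ ∧ (∀ x, φ x ≤ 0) ∧ Tendsto φ (cocompact R3) (nhds 0) ∧
    Integrable (fun x => ‖fderiv ℝ φ x‖ ^ 2) ∧ 0 < mX φ

def aphi (φ : R3 → ℝ) (e : ℝ) : ℝ :=
  (8 * π * Real.sqrt 2 / 3) * ∫ x : R3, (max (e - φ x) 0) ^ ((3 : ℝ) / 2)


/-!
Push Lebesgue measure on `{E < 0}` forward by the energy `E(x, v) = |v|²/2 + φ(x)`. Integrating
over `x` the volume of the ball `{v : |v|²/2 < e - φ(x)}` shows that the resulting measure `μ` on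
`(-∞, 0)` satisfies `μ(-∞, e) = a_φ(e)`. Since `a_φ` is increasing with inverse `a_φ⁻¹`, pushing
`μ` forward once more by `a_φ` gives Lebesgue measure on `(0, ∞)`: the preimage of `(-∞, s)` is
`(-∞, a_φ⁻¹(s))`, of `μ`-measure `s`. Composing the two pushforwards and writing
`e = a_φ⁻¹(a_φ(e))`, valid `μ`-a.e., gives the identity.
-/

lemma measure_Ico_of_measure_Iio {ν : Measure ℝ} (h : ∀ b, ν (Iio b) = .ofReal b) {a b : ℝ}
    (hab : a ≤ b) : ν (Ico a b) = .ofReal b - .ofReal a := by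
  rw [show Ico a b = Iio b \ Iio a by ext; simp,
    measure_sdiff (Iio_subset_Iio hab) measurableSet_Iio.nullMeasurableSet (by simp [h]), h, h]

lemma eq_volume_restrict_Ioi_of_measure_Iio {ν : Measure ℝ} (h : ∀ b, ν (Iio b) = .ofReal b) :
    ν = volume.restrict (Ioi 0) := by
  have hvol (b : ℝ) : volume.restrict (Ioi (0 : ℝ)) (Iio b) = .ofReal b := by
    rw [Measure.restrict_apply measurableSet_Iio, Iio_inter_Ioi, Real.volume_Ioo, sub_zero]
  refine (Measure.ext_of_Ico _ _ fun a b hab => ?_).symm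
  rw [measure_Ico_of_measure_Iio hvol hab.le, measure_Ico_of_measure_Iio h hab.le]

section DistributionFunction

variable {μ : Measure ℝ} {a aInv : ℝ → ℝ} {m : ℝ}

lemma monotoneOn_of_measure_Iio (hμ : ∀ e < 0, μ (Iio e) = .ofReal (a e)) (ha : ∀ e, 0 ≤ a e) :
    MonotoneOn a (Iio 0) := by
  intro e he e' he' hee'
  have := measure_mono (μ := μ) (Iio_subset_Iio hee')
  rwa [hμ e he, hμ e' he', ENNReal.ofReal_le_ofReal_iff (ha e')] at this

lemma monotoneOn_Ici_of_rightInverse (ha : MonotoneOn a (Iio 0))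
    (h₂ : ∀ s, 0 ≤ s → a (aInv s) = s ∧ aInv s ∈ Ico m 0) : MonotoneOn aInv (Ici 0) := by
  intro s hs t ht hst
  by_contra! hlt
  have := ha (h₂ t ht).2.2 (h₂ s hs).2.2 hlt.le
  rw [(h₂ t ht).1, (h₂ s hs).1] at this
  exact hlt.ne (congrArg aInv (le_antisymm hst this)).symm

lemma eq_zero_of_le_of_rightInverse (ha : MonotoneOn a (Iio 0)) (ha₀ : ∀ e, 0 ≤ a e)
    (h₂ : ∀ s, 0 ≤ s → a (aInv s) = s ∧ aInv s ∈ Ico m 0) {e : ℝ} (he : e ≤ m) : a e = 0 := by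
  obtain ⟨h0, hm, hneg⟩ := h₂ 0 le_rfl
  refine le_antisymm ?_ (ha₀ e)
  calc a e ≤ a (aInv 0) := ha (he.trans_lt (hm.trans_lt hneg)) hneg (he.trans hm)
    _ = 0 := h0

lemma lt_iff_lt_of_rightInverse (ha : MonotoneOn a (Iio 0)) (ha₀ : ∀ e, 0 ≤ a e)
    (h₁ : ∀ e ∈ Ico m 0, aInv (a e) = e) (h₂ : ∀ s, 0 ≤ s → a (aInv s) = s ∧ aInv s ∈ Ico m 0)
    {e b : ℝ} (he : e < 0) (hb : 0 < b) : a e < b ↔ e < aInv b := by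
  obtain ⟨hab, -, hb0⟩ := h₂ b hb.le
  constructor
  · intro h
    by_contra! hle
    linarith [ha hb0 he hle]
  · intro h
    refine ((ha he hb0 h.le).trans_eq hab).lt_of_ne fun heq => ?_
    rcases le_or_gt e m with hem | hem
    · linarith [eq_zero_of_le_of_rightInverse ha ha₀ h₂ hem]
    · exact h.ne (heq ▸ h₁ e ⟨hem.le, he⟩).symm

lemma ae_lt_zero_of_measure_Ici (hμ₀ : μ (Ici 0) = 0) : ∀ᵐ e ∂μ, e < 0 := by
  rw [ae_iff]
  simp only [not_lt]
  exact hμ₀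

lemma aemeasurable_of_monotoneOn_Iio (ha : MonotoneOn a (Iio 0)) (hμ₀ : μ (Ici 0) = 0) :
    AEMeasurable a μ := by
  rw [← Measure.restrict_eq_self_of_ae_mem (ae_lt_zero_of_measure_Ici hμ₀)]
  exact aemeasurable_restrict_of_monotoneOn measurableSet_Iio ha

lemma ae_mem_Ico_of_rightInverse (hμ : ∀ e < 0, μ (Iio e) = .ofReal (a e)) (ha₀ : ∀ e, 0 ≤ a e)
    (hμ₀ : μ (Ici 0) = 0) (h₂ : ∀ s, 0 ≤ s → a (aInv s) = s ∧ aInv s ∈ Ico m 0) :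
    ∀ᵐ e ∂μ, e ∈ Ico m 0 := by
  have hm : m < 0 := (h₂ 0 le_rfl).2.1.trans_lt (h₂ 0 le_rfl).2.2
  have hlt : μ (Iio m) = 0 := by
    rw [hμ m hm, eq_zero_of_le_of_rightInverse (monotoneOn_of_measure_Iio hμ ha₀) ha₀ h₂ le_rfl,
      ENNReal.ofReal_zero]
  filter_upwards [ae_lt_zero_of_measure_Ici hμ₀, measure_eq_zero_iff_ae_notMem.1 hlt]
    with e he hem
  exact ⟨not_lt.1 hem, he⟩

lemma map_measure_Iio_of_rightInverse (hμ : ∀ e < 0, μ (Iio e) = .ofReal (a e))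
    (ha₀ : ∀ e, 0 ≤ a e) (hμ₀ : μ (Ici 0) = 0) (h₁ : ∀ e ∈ Ico m 0, aInv (a e) = e)
    (h₂ : ∀ s, 0 ≤ s → a (aInv s) = s ∧ aInv s ∈ Ico m 0) (b : ℝ) :
    μ.map a (Iio b) = .ofReal b := by
  have ha := monotoneOn_of_measure_Iio hμ ha₀
  rw [Measure.map_apply_of_aemeasurable (aemeasurable_of_monotoneOn_Iio ha hμ₀) measurableSet_Iio]
  rcases le_or_gt b 0 with hb | hb
  · have : a ⁻¹' Iio b = ∅ := eq_empty_of_forall_notMem fun e he => (he.trans_le hb).not_ge (ha₀ e)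
    rw [this, measure_empty, ENNReal.ofReal_of_nonpos hb]
  obtain ⟨hab, -, hb0⟩ := h₂ b hb.le
  have hpre : a ⁻¹' Iio b ∩ Iio 0 = Iio (aInv b) := by
    ext e
    simp only [mem_inter_iff, mem_preimage, mem_Iio]
    exact ⟨fun ⟨h, he⟩ => (lt_iff_lt_of_rightInverse ha ha₀ h₁ h₂ he hb).1 h,
      fun h => ⟨(lt_iff_lt_of_rightInverse ha ha₀ h₁ h₂ (h.trans hb0) hb).2 h, h.trans hb0⟩⟩
  rw [← measure_inter_conull (t := Iio 0) (by rwa [compl_Iio]), hpre, hμ _ hb0, hab]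

lemma map_eq_volume_restrict_Ioi_of_rightInverse (hμ : ∀ e < 0, μ (Iio e) = .ofReal (a e))
    (ha₀ : ∀ e, 0 ≤ a e) (hμ₀ : μ (Ici 0) = 0) (h₁ : ∀ e ∈ Ico m 0, aInv (a e) = e)
    (h₂ : ∀ s, 0 ≤ s → a (aInv s) = s ∧ aInv s ∈ Ico m 0) :
    μ.map a = volume.restrict (Ioi 0) :=
  eq_volume_restrict_Ioi_of_measure_Iio (map_measure_Iio_of_rightInverse hμ ha₀ hμ₀ h₁ h₂)

theorem integral_comp_eq_setIntegral_Ioi (hμ : ∀ e < 0, μ (Iio e) = .ofReal (a e))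
    (ha₀ : ∀ e, 0 ≤ a e) (hμ₀ : μ (Ici 0) = 0) (h₁ : ∀ e ∈ Ico m 0, aInv (a e) = e)
    (h₂ : ∀ s, 0 ≤ s → a (aInv s) = s ∧ aInv s ∈ Ico m 0) {α γ : ℝ → ℝ} (hα : Measurable α)
    (hγ : AEStronglyMeasurable γ (volume.restrict (Ioi 0))) :
    ∫ e, α e * γ (a e) ∂μ = ∫ s in Ioi 0, α (aInv s) * γ s := by
  have ha := monotoneOn_of_measure_Iio hμ ha₀
  have hmap := map_eq_volume_restrict_Ioi_of_rightInverse hμ ha₀ hμ₀ h₁ h₂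
  have hInv : AEMeasurable aInv (volume.restrict (Ioi 0)) :=
    aemeasurable_restrict_of_monotoneOn measurableSet_Ioi
      ((monotoneOn_Ici_of_rightInverse ha h₂).mono Ioi_subset_Ici_self)
  rw [← hmap] at hγ hInv ⊢
  have hF : AEStronglyMeasurable (fun s => α (aInv s) * γ s) (μ.map a) :=
    (hα.comp_aemeasurable hInv).aestronglyMeasurable.mul hγ
  rw [integral_map (aemeasurable_of_monotoneOn_Iio ha hμ₀) hF]
  refine integral_congr_ae ?_
  filter_upwards [ae_mem_Ico_of_rightInverse hμ ha₀ hμ₀ h₂] with e he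
  rw [h₁ e he]

lemma aestronglyMeasurable_mul_comp_of_rightInverse (hμ : ∀ e < 0, μ (Iio e) = .ofReal (a e))
    (ha₀ : ∀ e, 0 ≤ a e) (hμ₀ : μ (Ici 0) = 0) (h₁ : ∀ e ∈ Ico m 0, aInv (a e) = e)
    (h₂ : ∀ s, 0 ≤ s → a (aInv s) = s ∧ aInv s ∈ Ico m 0) {α γ : ℝ → ℝ} (hα : Measurable α)
    (hγ : AEStronglyMeasurable γ (volume.restrict (Ioi 0))) :
    AEStronglyMeasurable (fun e => α e * γ (a e)) μ := by
  rw [← map_eq_volume_restrict_Ioi_of_rightInverse hμ ha₀ hμ₀ h₁ h₂] at hγ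
  exact hα.aestronglyMeasurable.mul (hγ.comp_aemeasurable
    (aemeasurable_of_monotoneOn_Iio (monotoneOn_of_measure_Iio hμ ha₀) hμ₀))

end DistributionFunction

lemma isCompact_preimage_Iic_of_tendsto_cocompact {X : Type*} [TopologicalSpace X] {f : X → ℝ}
    (hf : Continuous f) (h : Tendsto f (cocompact X) (nhds 0)) {e : ℝ} (he : e < 0) :
    IsCompact (f ⁻¹' Iic e) := by
  obtain ⟨K, hK, hKf⟩ := mem_cocompact.1 (h (Ioi_mem_nhds he))
  refine hK.of_isClosed_subset (isClosed_Iic.preimage hf) fun x hx => ?_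
  by_contra hxK
  exact (show f x ≤ e from hx).not_gt (hKf hxK)

lemma setOf_norm_sq_half_add_lt_eq_ball {E : Type*} [SeminormedAddCommGroup E] (c e : ℝ) :
    {v : E | ‖v‖ ^ 2 / 2 + c < e} = Metric.ball 0 √(2 * (e - c)) := by
  ext v
  rw [mem_ofPred_eq, mem_ball_zero_iff, Real.lt_sqrt (norm_nonneg v)]
  constructor <;> intro h <;> linarith

lemma volume_setOf_norm_sq_half_add_lt (c e : ℝ) :
    volume {v : R3 | ‖v‖ ^ 2 / 2 + c < e} =
      .ofReal (8 * π * √2 / 3 * max (e - c) 0 ^ ((3 : ℝ) / 2)) := by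
  rw [setOf_norm_sq_half_add_lt_eq_ball, EuclideanSpace.volume_ball_fin_three,
    ← ENNReal.ofReal_pow (Real.sqrt_nonneg _), ← ENNReal.ofReal_mul (by positivity)]
  congr 1
  rcases le_or_gt (e - c) 0 with h | h
  · rw [Real.sqrt_eq_zero_of_nonpos (by linarith), max_eq_right h, Real.zero_rpow (by norm_num)]
    ring
  · rw [max_eq_left h.le, show (3 : ℝ) / 2 = 1 + 1 / 2 by norm_num, Real.rpow_add h,
      Real.rpow_one, ← Real.sqrt_eq_rpow, Real.sqrt_mul zero_le_two]
    have h2 : √2 ^ 2 = 2 := Real.sq_sqrt zero_le_two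
    have hs : √(e - c) ^ 2 = e - c := Real.sq_sqrt h.le
    linear_combination (4 * π / 3 * √2 * √(e - c)) * (√(e - c) ^ 2 * h2 + 2 * hs)

section Energy

variable {φ : R3 → ℝ}

def energy (φ : R3 → ℝ) (p : R3 × R3) : ℝ := ‖p.2‖ ^ 2 / 2 + φ p.1

lemma continuous_energy (hφ : Continuous φ) : Continuous (energy φ) := by
  unfold energy
  fun_prop

lemma integrable_max_sub_rpow (hφ : Continuous φ) (hφ₀ : Tendsto φ (cocompact R3) (nhds 0))
    {e : ℝ} (he : e < 0) : Integrable fun x => max (e - φ x) 0 ^ ((3 : ℝ) / 2) := by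
  refine Continuous.integrable_of_hasCompactSupport
    ((by fun_prop : Continuous fun x => max (e - φ x) 0).rpow_const fun _ => Or.inr (by norm_num))
    (HasCompactSupport.intro (isCompact_preimage_Iic_of_tendsto_cocompact hφ hφ₀ he) fun x hx => ?_)
  rw [max_eq_right (sub_nonpos.2 (not_le.1 hx).le), Real.zero_rpow (by norm_num)]

lemma volume_setOf_energy_lt (hφ : Continuous φ) (hφ₀ : Tendsto φ (cocompact R3) (nhds 0))
    {e : ℝ} (he : e < 0) : volume {p | energy φ p < e} = .ofReal (aphi φ e) := by
  rw [Measure.volume_eq_prod, Measure.prod_apply (measurableSet_lt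
    (continuous_energy hφ).measurable measurable_const)]
  simp_rw [energy, preimage_ofPred_eq, volume_setOf_norm_sq_half_add_lt]
  rw [← ofReal_integral_eq_lintegral_ofReal
    ((integrable_max_sub_rpow hφ hφ₀ he).const_mul _) (.of_forall fun x => by positivity),
    integral_const_mul, aphi]

lemma aphi_nonneg (φ : R3 → ℝ) (e : ℝ) : 0 ≤ aphi φ e :=
  mul_nonneg (by positivity) (integral_nonneg fun _ => by positivity)

def energyDistribution (φ : R3 → ℝ) : Measure ℝ :=
  (volume.restrict {p | energy φ p < 0}).map (energy φ)

lemma energyDistribution_Iio (hφ : Continuous φ) (hφ₀ : Tendsto φ (cocompact R3) (nhds 0))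
    (e : ℝ) (he : e < 0) : energyDistribution φ (Iio e) = .ofReal (aphi φ e) := by
  have hE := (continuous_energy hφ).measurable
  rw [energyDistribution, Measure.map_apply hE measurableSet_Iio,
    Measure.restrict_apply (hE measurableSet_Iio), ← volume_setOf_energy_lt hφ hφ₀ he]
  congr 1
  ext p
  exact ⟨fun h => h.1, fun h => ⟨h, h.trans he⟩⟩

lemma energyDistribution_Ici (hφ : Continuous φ) : energyDistribution φ (Ici 0) = 0 := by
  have hE := (continuous_energy hφ).measurable
  rw [energyDistribution, Measure.map_apply hE measurableSet_Ici,
    Measure.restrict_apply (hE measurableSet_Ici)]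
  have : energy φ ⁻¹' Ici 0 ∩ {p | energy φ p < 0} = ∅ :=
    eq_empty_of_forall_notMem fun p ⟨h, h'⟩ => (show (0 : ℝ) ≤ energy φ p from h).not_gt h'
  rw [this, measure_empty]

end Energy

theorem change_of_variables_general (φ : R3 → ℝ) (hφ : memX φ)
    (x₀ : R3)
    (aInv : ℝ → ℝ)
    (haInv₁ : ∀ e ∈ Ico (φ x₀) (0 : ℝ), aInv (aphi φ e) = e)
    (haInv₂ : ∀ s : ℝ, 0 ≤ s → aphi φ (aInv s) = s ∧ aInv s ∈ Ico (φ x₀) (0 : ℝ))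
    (α : ℝ → ℝ) (hα : Continuous α)
    (γ : ℝ → ℝ) (hγ : IntegrableOn γ (Ioi (0 : ℝ))) :
    ∫ p in {p : R3 × R3 | ‖p.2‖ ^ 2 / 2 + φ p.1 < 0},
        α (‖p.2‖ ^ 2 / 2 + φ p.1) * γ (aphi φ (‖p.2‖ ^ 2 / 2 + φ p.1))
      = ∫ s in Ioi (0 : ℝ), α (aInv s) * γ s := by
  obtain ⟨hφc, -, hφ₀, -, -⟩ := hφ
  have hμ := energyDistribution_Iio hφc hφ₀
  have hμ₀ := energyDistribution_Ici hφc
  rw [← integral_comp_eq_setIntegral_Ioi hμ (aphi_nonneg φ) hμ₀ haInv₁ haInv₂ hα.measurable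
    hγ.aestronglyMeasurable]
  exact (integral_map (continuous_energy hφc).aemeasurable
    (aestronglyMeasurable_mul_comp_of_rightInverse hμ (aphi_nonneg φ) hμ₀ haInv₁ haInv₂
      hα.measurable hγ.aestronglyMeasurable)).symm

theorem change_of_variables (φ : R3 → ℝ) (hφ : memX φ)
    (x₀ : R3) (hx₀ : ∀ x, φ x₀ ≤ φ x)
    (aInv : ℝ → ℝ)
    (haInv₁ : ∀ e ∈ Ico (φ x₀) (0 : ℝ), aInv (aphi φ e) = e)
    (haInv₂ : ∀ s : ℝ, 0 ≤ s → aphi φ (aInv s) = s ∧ aInv s ∈ Ico (φ x₀) (0 : ℝ))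
    (α : ℝ → ℝ) (hα : Continuous α) (hαb : ∃ M, ∀ e, α e ≤ M) (hαpos : ∀ e, 0 ≤ α e)
    (γ : ℝ → ℝ) (hγ : IntegrableOn γ (Ioi (0 : ℝ))) (hγpos : ∀ s, 0 ≤ γ s) :
    ∫ p in {p : R3 × R3 | ‖p.2‖ ^ 2 / 2 + φ p.1 < 0},
        α (‖p.2‖ ^ 2 / 2 + φ p.1) * γ (aphi φ (‖p.2‖ ^ 2 / 2 + φ p.1))
      = ∫ s in Ioi (0 : ℝ), α (aInv s) * γ s :=
  change_of_variables_general φ hφ x₀ aInv haInv₁ haInv₂ α hα γ hγ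
end
end

section
/- Let φ, φ̃ ∈ X and h = φ̃ − φ. Then the map (λ,e) ↦ a_{φ+λh}(e) is C¹ on [0,1]×(-∞,0) with ∂_λ a_{φ+λh}(e) = −4π√2 ∫_{ℝ³}(e − φ(x) − λh(x))₊^{1/2} h(x) dx. -/
/-! The integrand `(e - φ x - λ h x)₊^{3/2}` is C¹ in `(λ, e)`, with derivative
`(3/2) (e - φ x - λ h x)₊^{1/2} • (de - h x dλ)`, jointly continuous in `(λ, e, x)`.
Since `φ` and `h` vanish at infinity and `e < 0`, for `(λ, e)` near a given point the integrand
vanishes outside one compact set, on which its derivative is bounded; differentiation under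
the integral sign and dominated convergence then give the claim. -/

open MeasureTheory Real Filter Set ENNReal

noncomputable section

open scoped Topology

theorem hasDerivAt_max_zero_rpow {p : ℝ} (hp : 1 < p) (t : ℝ) :
    HasDerivAt (fun s : ℝ => max s 0 ^ p) (p * max t 0 ^ (p - 1)) t := by
  have hne : ∀ t ≠ 0, HasDerivAt (fun s : ℝ => max s 0 ^ p) (p * max t 0 ^ (p - 1)) t := by
    intro t ht
    rcases ht.lt_or_gt with ht | ht
    · have hzero : (fun s : ℝ => max s 0 ^ p) =ᶠ[𝓝 t] fun _ => (0 : ℝ) ^ p := by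
        filter_upwards [Iio_mem_nhds ht] with s hs
        rw [max_eq_right hs.le]
      rw [max_eq_right ht.le, zero_rpow (by linarith), mul_zero]
      exact (hasDerivAt_const t _).congr_of_eventuallyEq hzero
    · have hid : (fun s : ℝ => max s 0 ^ p) =ᶠ[𝓝 t] fun s => s ^ p := by
        filter_upwards [Ioi_mem_nhds ht] with s hs
        rw [max_eq_left hs.le]
      rw [max_eq_left ht.le]
      exact (hasDerivAt_rpow_const (Or.inl ht.ne')).congr_of_eventuallyEq hid
  have hcont : ∀ r : ℝ, 0 ≤ r → Continuous fun s : ℝ => max s 0 ^ r := fun r hr =>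
    (continuous_rpow_const hr).comp (continuous_id.max continuous_const)
  exact hasDerivAt_of_hasDerivAt_of_ne' hne (hcont p (by linarith)).continuousAt
    (continuous_const.mul (hcont (p - 1) (by linarith))).continuousAt t

def fderivMaxSubRpow (p a b : ℝ) (q : ℝ × ℝ) : ℝ × ℝ →L[ℝ] ℝ :=
  (p * max (q.2 - (a + q.1 * b)) 0 ^ (p - 1)) •
    (ContinuousLinearMap.snd ℝ ℝ ℝ - b • ContinuousLinearMap.fst ℝ ℝ ℝ)

theorem hasFDerivAt_max_sub_rpow {p : ℝ} (hp : 1 < p) (a b : ℝ) (q : ℝ × ℝ) :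
    HasFDerivAt (fun q : ℝ × ℝ => max (q.2 - (a + q.1 * b)) 0 ^ p)
      (fderivMaxSubRpow p a b q) q := by
  have hinner : HasFDerivAt (fun q : ℝ × ℝ => q.2 - (a + q.1 * b))
      (ContinuousLinearMap.snd ℝ ℝ ℝ - b • ContinuousLinearMap.fst ℝ ℝ ℝ) q :=
    hasFDerivAt_snd.fun_sub ((hasFDerivAt_fst.mul_const b).const_add a)
  exact (hasDerivAt_max_zero_rpow hp _).comp_hasFDerivAt q hinner

section CompactSupport

variable {P X G : Type*} [NormedAddCommGroup P] [NormedSpace ℝ P] [ProperSpace P]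
  [TopologicalSpace X] [T2Space X] [MeasurableSpace X] [OpensMeasurableSpace X]
  {μ : Measure X} [IsFiniteMeasureOnCompacts μ]
  [NormedAddCommGroup G] [NormedSpace ℝ G]
  {F : P → X → G} {F' : P → X → P →L[ℝ] G}

theorem hasFDerivAt_integral_of_eventually_forall_notMem_eq_zero {q₀ : P} {K : Set X}
    (hK : IsCompact K) (hF : ∀ q, Continuous (F q)) (hF' : Continuous (Function.uncurry F'))
    (hderiv : ∀ q x, HasFDerivAt (F · x) (F' q x) q)
    (hsupp : ∀ᶠ q in 𝓝 q₀, ∀ x ∉ K, F q x = 0) :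
    HasFDerivAt (fun q => ∫ x, F q x ∂μ) (∫ x, F' q₀ x ∂μ) q₀ ∧
      ContinuousAt (fun q => ∫ x, F' q x ∂μ) q₀ ∧ Integrable (F' q₀) μ := by
  obtain ⟨r, hr, hball⟩ := Metric.eventually_nhds_iff_ball.mp hsupp
  have hF'supp : ∀ q ∈ Metric.ball q₀ r, ∀ x ∉ K, F' q x = 0 := fun q hq x hx =>
    (hderiv q x).unique <| (hasFDerivAt_const 0 q).congr_of_eventuallyEq <|
      eventually_of_mem (Metric.isOpen_ball.mem_nhds hq) fun q' hq' => hball q' hq' x hx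
  obtain ⟨C, hC⟩ :=
    ((isCompact_closedBall q₀ r).prod hK).exists_bound_of_continuousOn hF'.continuousOn
  have hbound : ∀ q ∈ Metric.ball q₀ r, ∀ x, ‖F' q x‖ ≤ K.indicator (fun _ => C) x := by
    intro q hq x
    by_cases hx : x ∈ K
    · rw [indicator_of_mem hx]
      exact hC (q, x) ⟨Metric.ball_subset_closedBall hq, hx⟩
    · rw [indicator_of_notMem hx, hF'supp q hq x hx, norm_zero]
  have hbound_int : Integrable (K.indicator fun _ => C) μ :=
    (integrableOn_const hK.measure_lt_top.ne).integrable_indicator hK.measurableSet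
  have hF_int : ∀ q ∈ Metric.ball q₀ r, Integrable (F q) μ := fun q hq =>
    (hF q).integrable_of_hasCompactSupport (HasCompactSupport.intro hK (hball q hq))
  have hF'_int : ∀ q ∈ Metric.ball q₀ r, Integrable (F' q) μ := fun q hq =>
    (hF'.uncurry_left q).integrable_of_hasCompactSupport
      (HasCompactSupport.intro hK (hF'supp q hq))
  have hq₀ : q₀ ∈ Metric.ball q₀ r := Metric.mem_ball_self hr
  have hball_nhds : Metric.ball q₀ r ∈ 𝓝 q₀ := Metric.ball_mem_nhds q₀ hr
  refine ⟨?_, ?_, hF'_int q₀ hq₀⟩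
  · exact hasFDerivAt_integral_of_dominated_of_fderiv_le hball_nhds
      (eventually_of_mem hball_nhds fun q hq => (hF_int q hq).aestronglyMeasurable)
      (hF_int q₀ hq₀) (hF'_int q₀ hq₀).aestronglyMeasurable
      (ae_of_all _ fun x q hq => hbound q hq x) hbound_int
      (ae_of_all _ fun x q _ => hderiv q x)
  · exact continuousAt_of_dominated
      (eventually_of_mem hball_nhds fun q hq => (hF'_int q hq).aestronglyMeasurable)
      (eventually_of_mem hball_nhds fun q hq => ae_of_all _ (hbound q hq)) hbound_int
      (ae_of_all _ fun x => (hF'.uncurry_right x).continuousAt)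

end CompactSupport

theorem exists_isCompact_eventually_forall_notMem_sub_nonpos {X : Type*} [TopologicalSpace X]
    {φ h : X → ℝ} (hφ : Tendsto φ (cocompact X) (𝓝 0)) (hh : Tendsto h (cocompact X) (𝓝 0))
    {q₀ : ℝ × ℝ} (he : q₀.2 < 0) :
    ∃ K, IsCompact K ∧ ∀ᶠ q in 𝓝 q₀, ∀ x ∉ K, q.2 - (φ x + q.1 * h x) ≤ 0 := by
  set M := |q₀.1| + 1
  have hsmall : ∀ᶠ x in cocompact X, |φ x| + M * |h x| < -q₀.2 / 2 := by
    have : Tendsto (fun x => |φ x| + M * |h x|) (cocompact X) (𝓝 0) := by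
      simpa using hφ.abs.add (hh.abs.const_mul M)
    exact this.eventually_lt_const (by linarith)
  obtain ⟨K, hK, hKsmall⟩ := mem_cocompact.mp hsmall
  have hl : ∀ᶠ q in 𝓝 q₀, |q.1| < M :=
    (continuous_fst.abs.tendsto q₀).eventually_lt_const (lt_add_one _)
  have he' : ∀ᶠ q in 𝓝 q₀, q.2 < q₀.2 / 2 :=
    (continuous_snd.tendsto q₀).eventually_lt_const (by linarith)
  refine ⟨K, hK, ?_⟩
  filter_upwards [hl, he'] with q hql hqe x hx
  have hxsmall : |φ x| + M * |h x| < -q₀.2 / 2 := hKsmall hx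
  have hlh : |q.1 * h x| ≤ M * |h x| := by
    rw [abs_mul]
    exact mul_le_mul_of_nonneg_right hql.le (abs_nonneg _)
  linarith [neg_abs_le (φ x), neg_abs_le (q.1 * h x)]

section PositivePartPower

variable {X : Type*} [TopologicalSpace X] [T2Space X] [MeasurableSpace X]
  [OpensMeasurableSpace X] {μ : Measure X} [IsFiniteMeasureOnCompacts μ] {φ h : X → ℝ}
  {p : ℝ}

theorem hasFDerivAt_integral_max_sub_rpow (hφc : Continuous φ) (hhc : Continuous h)
    (hφ : Tendsto φ (cocompact X) (𝓝 0)) (hh : Tendsto h (cocompact X) (𝓝 0)) (hp : 1 < p)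
    {q₀ : ℝ × ℝ} (he : q₀.2 < 0) :
    HasFDerivAt (fun q : ℝ × ℝ => ∫ x, max (q.2 - (φ x + q.1 * h x)) 0 ^ p ∂μ)
        (∫ x, fderivMaxSubRpow p (φ x) (h x) q₀ ∂μ) q₀ ∧
      ContinuousAt (fun q => ∫ x, fderivMaxSubRpow p (φ x) (h x) q ∂μ) q₀ ∧
      Integrable (fun x => fderivMaxSubRpow p (φ x) (h x) q₀) μ := by
  obtain ⟨K, hK, hsupp⟩ := exists_isCompact_eventually_forall_notMem_sub_nonpos hφ hh he
  refine hasFDerivAt_integral_of_eventually_forall_notMem_eq_zero hK (fun q => ?_) ?_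
    (fun q x => hasFDerivAt_max_sub_rpow hp (φ x) (h x) q) ?_
  · fun_prop (disch := linarith)
  · unfold fderivMaxSubRpow
    fun_prop (disch := linarith)
  · filter_upwards [hsupp] with q hq x hx
    rw [max_eq_right (hq x hx), zero_rpow (by linarith)]

theorem contDiffOn_integral_max_sub_rpow (hφc : Continuous φ) (hhc : Continuous h)
    (hφ : Tendsto φ (cocompact X) (𝓝 0)) (hh : Tendsto h (cocompact X) (𝓝 0)) (hp : 1 < p) :
    ContDiffOn ℝ 1 (fun q : ℝ × ℝ => ∫ x, max (q.2 - (φ x + q.1 * h x)) 0 ^ p ∂μ)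
      {q | q.2 < 0} := by
  have hU : IsOpen {q : ℝ × ℝ | q.2 < 0} := isOpen_lt continuous_snd continuous_const
  have hG := fun (q : ℝ × ℝ) (hq : q.2 < 0) =>
    hasFDerivAt_integral_max_sub_rpow (μ := μ) hφc hhc hφ hh hp hq
  exact fun q hq => (contDiffAt_one_iff.2 ⟨_, _, hU.mem_nhds hq,
    fun q' hq' => (hG q' hq').2.1.continuousWithinAt,
    fun q' hq' => (hG q' hq').1⟩).contDiffWithinAt

theorem hasDerivAt_integral_max_sub_rpow (hφc : Continuous φ) (hhc : Continuous h)
    (hφ : Tendsto φ (cocompact X) (𝓝 0)) (hh : Tendsto h (cocompact X) (𝓝 0)) (hp : 1 < p)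
    {e : ℝ} (he : e < 0) (l : ℝ) :
    HasDerivAt (fun l : ℝ => ∫ x, max (e - (φ x + l * h x)) 0 ^ p ∂μ)
      (-p * ∫ x, max (e - (φ x + l * h x)) 0 ^ (p - 1) * h x ∂μ) l := by
  obtain ⟨hG, -, hint⟩ := hasFDerivAt_integral_max_sub_rpow (μ := μ) (q₀ := (l, e))
    hφc hhc hφ hh hp he
  have hline : HasDerivAt (fun l : ℝ => (l, e)) (1, 0) l :=
    (hasDerivAt_id l).prodMk (hasDerivAt_const l e)
  refine (hG.comp_hasDerivAt l hline).congr_deriv ?_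
  rw [ContinuousLinearMap.integral_apply hint, ← integral_const_mul]
  refine integral_congr_ae (ae_of_all _ fun x => ?_)
  simp only [fderivMaxSubRpow, smul_apply, sub_apply,
    ContinuousLinearMap.coe_snd', ContinuousLinearMap.coe_fst', smul_eq_mul]
  ring

end PositivePartPower

theorem jacobian_lambda_derivative (φ φ' : R3 → ℝ) (hφ : memX φ) (hφ' : memX φ')
    (h : R3 → ℝ) (hh : h = φ' - φ) :
    ContDiffOn ℝ 1 (fun q : ℝ × ℝ => aphi (fun x => φ x + q.1 * h x) q.2)
      ((Icc (0 : ℝ) 1) ×ˢ (Iio (0 : ℝ))) ∧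
    ∀ lam ∈ Icc (0 : ℝ) 1, ∀ e < (0 : ℝ),
      HasDerivAt (fun l : ℝ => aphi (fun x => φ x + l * h x) e)
        (-(4 * π * Real.sqrt 2) *
          ∫ x : R3, (max (e - φ x - lam * h x) 0) ^ ((1 : ℝ) / 2) * h x) lam := by
  obtain ⟨hφc, -, hφ0, -, -⟩ := hφ
  obtain ⟨hφ'c, -, hφ'0, -, -⟩ := hφ'
  have hhc : Continuous h := hh ▸ hφ'c.sub hφc
  have hh0 : Tendsto h (cocompact R3) (𝓝 0) := by
    rw [hh, ← sub_zero 0]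
    exact hφ'0.sub hφ0
  have hp : (1 : ℝ) < 3 / 2 := by norm_num
  refine ⟨?_, fun lam _ e he => ?_⟩
  · exact (contDiffOn_const.mul (contDiffOn_integral_max_sub_rpow hφc hhc hφ0 hh0 hp)).mono
      fun q hq => hq.2
  · refine ((hasDerivAt_integral_max_sub_rpow hφc hhc hφ0 hh0 hp he lam).const_mul
      (8 * π * √2 / 3)).congr_deriv ?_
    simp_rw [sub_sub]
    rw [show (3 : ℝ) / 2 - 1 = 1 / 2 by norm_num]
    ring
end
end
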